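/- For positive bounded operators A, B on a Hilbert space H, the pair (A^{1/2}, (A+B)^{1/2} − A^{1/2}) has the range additivity property, i.e., R((A+B)^{1/2}) = R(A^{1/2}) + R((A+B)^{1/2} − A^{1/2}). -/

import Mathlib

/-!
Since `sA² = A ≤ A + B = sAB²`, we have `‖sA x‖ ≤ ‖sAB x‖` for all `x`, so Douglas' lemma gives
`R(sA) ⊆ R(sAB)`. Then `R(sAB - sA) ⊆ R(sAB) + R(sA) = R(sAB)`, and the inclusion
`R(sAB) ⊆ R(sA) + R(sAB - sA)` is trivial.
-/

open ContinuousLinearMap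

variable {H : Type*} [NormedAddCommGroup H] [InnerProductSpace ℂ H] [CompleteSpace H]

open scoped InnerProduct

theorem LinearMap.range_eq_range_sup_range_sub_of_range_le {R M M₂ : Type*} [Ring R]
    [AddCommGroup M] [AddCommGroup M₂] [Module R M] [Module R M₂] {f g : M →ₗ[R] M₂}
    (h : LinearMap.range f ≤ LinearMap.range g) :
    LinearMap.range g = LinearMap.range f ⊔ LinearMap.range (g - f) := by
  refine le_antisymm (by simpa using LinearMap.range_add_le f (g - f)) (sup_le h ?_)
  simpa [sub_eq_add_neg, LinearMap.range_neg] using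
    (LinearMap.range_add_le g (-f)).trans (sup_le le_rfl (by simpa using h))

section

variable {𝕜 E F : Type*} [RCLike 𝕜] [NormedAddCommGroup E] [NormedSpace 𝕜 E]
  [NormedAddCommGroup F] [NormedSpace 𝕜 F]

theorem LinearMap.exists_strongDual_comp_eq_of_norm_le (T : E →ₗ[𝕜] F) (φ : E →ₗ[𝕜] 𝕜) (c : ℝ)
    (h : ∀ x, ‖φ x‖ ≤ c * ‖T x‖) : ∃ ψ : StrongDual 𝕜 F, ∀ x, ψ (T x) = φ x := by
  obtain ⟨s, hs⟩ := T.rangeRestrict.exists_rightInverse_of_surjective T.range_rangeRestrict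
  have hTs : ∀ w, T (s w) = w := fun w => congrArg Subtype.val (LinearMap.congr_fun hs w)
  let g : StrongDual 𝕜 (LinearMap.range T) :=
    (φ ∘ₗ s).mkContinuous c fun w => by simpa [hTs] using h (s w)
  obtain ⟨ψ, hψ, -⟩ := exists_extension_norm_eq _ g
  refine ⟨ψ, fun x => ?_⟩
  -- The bound forces `φ` to vanish on `ker T`, so `φ ∘ s` does not depend on the choice of `s`.
  have hker : φ (s (T.rangeRestrict x) - x) = 0 :=
    norm_le_zero_iff.mp (by simpa [hTs] using h (s (T.rangeRestrict x) - x))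
  rw [map_sub, sub_eq_zero] at hker
  exact (hψ (T.rangeRestrict x)).trans hker

end

section

variable {𝕜 E F G : Type*} [RCLike 𝕜] [NormedAddCommGroup E] [InnerProductSpace 𝕜 E]
  [NormedAddCommGroup F] [InnerProductSpace 𝕜 F] [NormedAddCommGroup G] [InnerProductSpace 𝕜 G]
  [CompleteSpace E] [CompleteSpace F] [CompleteSpace G]

/-- One direction of Douglas' range inclusion theorem. -/
theorem ContinuousLinearMap.range_le_range_of_norm_adjoint_le (C : E →L[𝕜] G) (D : F →L[𝕜] G)
    (k : ℝ) (h : ∀ x, ‖(C†) x‖ ≤ k * ‖(D†) x‖) :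
    LinearMap.range (C : E →ₗ[𝕜] G) ≤ LinearMap.range (D : F →ₗ[𝕜] G) := by
  rintro _ ⟨u, rfl⟩
  have hbound : ∀ x, ‖innerSL 𝕜 (C u) x‖ ≤ ‖u‖ * k * ‖(D†) x‖ := fun x => calc
    ‖innerSL 𝕜 (C u) x‖ = ‖inner 𝕜 u ((C†) x)‖ := by rw [innerSL_apply_apply, adjoint_inner_right]
    _ ≤ ‖u‖ * ‖(C†) x‖ := norm_inner_le_norm _ _
    _ ≤ ‖u‖ * k * ‖(D†) x‖ := by rw [mul_assoc]; gcongr; exact h x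
  obtain ⟨ψ, hψ⟩ := LinearMap.exists_strongDual_comp_eq_of_norm_le (D† : G →ₗ[𝕜] F)
    (innerSL 𝕜 (C u) : G →ₗ[𝕜] 𝕜) _ hbound
  refine ⟨(InnerProductSpace.toDual 𝕜 F).symm ψ, ext_inner_right 𝕜 fun x => ?_⟩
  rw [coe_coe, coe_coe, ← adjoint_inner_right, InnerProductSpace.toDual_symm_apply]
  exact hψ x

theorem ContinuousLinearMap.norm_apply_le_of_adjoint_comp_self_le (S : E →L[𝕜] F)
    (T : E →L[𝕜] G) (h : S† ∘L S ≤ T† ∘L T) (x : E) : ‖S x‖ ≤ ‖T x‖ := by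
  have hx := h.re_inner_nonneg_left x
  rw [sub_apply, inner_sub_left, map_sub, ← apply_norm_sq_eq_inner_adjoint_left,
    ← apply_norm_sq_eq_inner_adjoint_left, sub_nonneg] at hx
  exact (pow_le_pow_iff_left₀ (norm_nonneg _) (norm_nonneg _) two_ne_zero).mp hx

end

/-- For positive operators `A, B`, the pair `(A^{1/2}, (A+B)^{1/2} - A^{1/2})` has the
range additivity property: `R((A+B)^{1/2}) = R(A^{1/2}) + R((A+B)^{1/2} - A^{1/2})`.
Here `sA` is the positive square root of `A` and `sAB` that of `A + B`. -/
theorem sqrt_range_additivity (A B sA sAB : H →L[ℂ] H)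
    (hB : B.IsPositive)
    (hsA : sA.IsPositive) (hsA2 : sA ∘L sA = A)
    (hsAB : sAB.IsPositive) (hsAB2 : sAB ∘L sAB = A + B) :
    LinearMap.range (sAB : H →ₗ[ℂ] H) = LinearMap.range (sA : H →ₗ[ℂ] H) ⊔ LinearMap.range ((sAB - sA : H →L[ℂ] H) : H →ₗ[ℂ] H) := by
  have hsA_adj := hsA.isSelfAdjoint.adjoint_eq
  have hsAB_adj := hsAB.isSelfAdjoint.adjoint_eq
  have hnorm : ∀ x, ‖sA x‖ ≤ ‖sAB x‖ := by
    refine norm_apply_le_of_adjoint_comp_self_le sA sAB ?_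
    rwa [hsA_adj, hsAB_adj, hsA2, hsAB2, le_def, add_sub_cancel_left]
  rw [ContinuousLinearMap.toLinearMap_sub]
  refine LinearMap.range_eq_range_sup_range_sub_of_range_le ?_
  exact range_le_range_of_norm_adjoint_le sA sAB 1 (by simpa [hsA_adj, hsAB_adj] using hnorm)
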